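/- Let (T, A)_ω be a DL-Lite_core weighted knowledge base, k an integer, A a concept name, and a an individual name. Let Ā be a fresh concept name, T' = T ∪ {A ⊓ Ā ⊑ ⊥}, A' = A ∪ {A(a), Ā(a)}, and let ω' extend ω by assigning weight ∞ to the axiom A ⊓ Ā ⊑ ⊥ and to the assertion A(a), and weight 1 to the assertion Ā(a). Then (T, A)_ω ⊨_p^k A(a) if and only if (T', A')_{ω'} ⊭_c^{k+1} Ā(a). -/

import Mathlib

namespace DL

/-! ### Syntax -/

abbrev IndName := ℕ
abbrev CName := ℕ
abbrev RName := ℕ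

/-- Roles: role names and inverse roles. -/
inductive Role where
  | name : RName → Role
  | inv  : RName → Role
deriving DecidableEq

/-- `ALCHIO` concepts. -/
inductive Concept where
  | top  : Concept
  | bot  : Concept
  | atom : CName → Concept
  | nom  : IndName → Concept
  | neg  : Concept → Concept
  | conj : Concept → Concept → Concept
  | ex   : Role → Concept → Concept
deriving DecidableEq

/-- TBox axioms: concept inclusions and role inclusions. -/
inductive Axiom where
  | ci : Concept → Concept → Axiom
  | ri : Role → Role → Axiom
deriving DecidableEq

/-- ABox assertions. -/
inductive Assertion where
  | ca : CName → IndName → Assertion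
  | ra : RName → IndName → IndName → Assertion
deriving DecidableEq

/-! ### Interpretations -/

/-- A DL interpretation with domain a subset of a universe `U`.  Individual names are
interpreted via `indI` (under the standard names assumption, the individual names of the
ABox under consideration are interpreted "as themselves", i.e. injectively). -/
structure Interp (U : Type) where
  dom : Set U
  indI : IndName → U
  cI : CName → Set U
  rI : RName → Set (U × U)
  cI_sub : ∀ A, cI A ⊆ dom
  rI_sub : ∀ r p, p ∈ rI r → p.1 ∈ dom ∧ p.2 ∈ dom

variable {U : Type}

/-- Every individual name denotes an element of the domain. -/
def Interp.Proper (I : Interp U) : Prop := ∀ a, I.indI a ∈ I.dom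

def Role.interp (I : Interp U) : Role → Set (U × U)
  | Role.name r => I.rI r
  | Role.inv r  => {p | (p.2, p.1) ∈ I.rI r}

def Concept.interp (I : Interp U) : Concept → Set U
  | Concept.top => I.dom
  | Concept.bot => ∅
  | Concept.atom A => I.cI A
  | Concept.nom a => {I.indI a} ∩ I.dom
  | Concept.neg C => I.dom \ Concept.interp I C
  | Concept.conj C D => Concept.interp I C ∩ Concept.interp I D
  | Concept.ex r C => {d | ∃ e, (d, e) ∈ Role.interp I r ∧ e ∈ Concept.interp I C}

def Assertion.sat (I : Interp U) : Assertion → Prop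
  | Assertion.ca A a => I.indI a ∈ I.cI A
  | Assertion.ra r a b => (I.indI a, I.indI b) ∈ I.rI r

/-! ### Violations and cost -/

/-- Violations of a concept inclusion `C ⊑ D`. -/
def vioCI (I : Interp U) (C D : Concept) : Set U :=
  Concept.interp I C \ Concept.interp I D

/-- Violations of a role inclusion `r ⊑ s`. -/
def vioRI (I : Interp U) (r s : Role) : Set (U × U) :=
  Role.interp I r \ Role.interp I s

/-- The number of violations of an axiom. -/
noncomputable def Axiom.vioCount (I : Interp U) : Axiom → ℕ∞
  | Axiom.ci C D => (vioCI I C D).encard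
  | Axiom.ri r s => (vioRI I r s).encard

open Classical in
/-- The cost of an interpretation w.r.t. a weighted knowledge base `(T, A)` with weight
functions `wT` (on TBox axioms) and `wA` (on ABox assertions). -/
noncomputable def cost (T : Finset Axiom) (A : Finset Assertion)
    (wT : Axiom → ℕ∞) (wA : Assertion → ℕ∞) (I : Interp U) : ℕ∞ :=
  (∑ τ ∈ T, wT τ * Axiom.vioCount I τ) +
    ∑ α ∈ A, (if Assertion.sat I α then 0 else wA α)

/-! ### Queries -/

inductive Term where
  | var : ℕ → Term
  | ind : IndName → Term
deriving DecidableEq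

inductive QAtom where
  | ca : CName → Term → QAtom
  | ra : RName → Term → Term → QAtom
deriving DecidableEq

/-- A Boolean conjunctive query: a finite set of atoms, all of whose variables are
(implicitly) existentially quantified. -/
abbrev BCQ := Finset QAtom

def Term.eval (I : Interp U) (π : ℕ → U) : Term → U
  | Term.var v => π v
  | Term.ind a => I.indI a

def QAtom.sat (I : Interp U) (π : ℕ → U) : QAtom → Prop
  | QAtom.ca A t => Term.eval I π t ∈ I.cI A
  | QAtom.ra r t t' => (Term.eval I π t, Term.eval I π t') ∈ I.rI r

/-- Satisfaction of a BCQ in an interpretation. -/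
def satQ (I : Interp U) (q : BCQ) : Prop :=
  ∃ π : ℕ → U, (∀ v, π v ∈ I.dom) ∧ ∀ a ∈ q, QAtom.sat I π a

/-- An instance query is a BCQ with a single atom. -/
def IsIQ (q : BCQ) : Prop := ∃ a : QAtom, q = {a}

/-! ### Cost-based semantics -/

/-- `k`-satisfiability: some interpretation has cost at most `k`. -/
def ksat (T : Finset Axiom) (A : Finset Assertion)
    (wT : Axiom → ℕ∞) (wA : Assertion → ℕ∞) (k : ℕ) : Prop :=
  ∃ (U : Type) (I : Interp U), I.Proper ∧ cost T A wT wA I ≤ (k : ℕ∞)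

/-- `K ⊨ₚᵏ q`: some interpretation of cost at most `k` satisfies `q`. -/
def satP (T : Finset Axiom) (A : Finset Assertion)
    (wT : Axiom → ℕ∞) (wA : Assertion → ℕ∞) (k : ℕ) (q : BCQ) : Prop :=
  ∃ (U : Type) (I : Interp U), I.Proper ∧ cost T A wT wA I ≤ (k : ℕ∞) ∧ satQ I q

/-- `K ⊨꜀ᵏ q`: every interpretation of cost at most `k` satisfies `q`. -/
def satC (T : Finset Axiom) (A : Finset Assertion)
    (wT : Axiom → ℕ∞) (wA : Assertion → ℕ∞) (k : ℕ) (q : BCQ) : Prop :=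
  ∀ (U : Type) (I : Interp U), I.Proper → cost T A wT wA I ≤ (k : ℕ∞) → satQ I q

/-- The optimal cost of a weighted knowledge base. -/
noncomputable def optCost (T : Finset Axiom) (A : Finset Assertion)
    (wT : Axiom → ℕ∞) (wA : Assertion → ℕ∞) : ℕ∞ :=
  sInf {c : ℕ∞ | ∃ (U : Type) (I : Interp U), I.Proper ∧ cost T A wT wA I = c}

/-- `K ⊨ₚᵒᵖᵗ q`: some interpretation of optimal cost satisfies `q`. -/
noncomputable def satPopt (T : Finset Axiom) (A : Finset Assertion)
    (wT : Axiom → ℕ∞) (wA : Assertion → ℕ∞) (q : BCQ) : Prop :=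
  ∃ (U : Type) (I : Interp U), I.Proper ∧ cost T A wT wA I = optCost T A wT wA ∧ satQ I q

/-- `K ⊨꜀ᵒᵖᵗ q`: every interpretation of optimal cost satisfies `q`. -/
noncomputable def satCopt (T : Finset Axiom) (A : Finset Assertion)
    (wT : Axiom → ℕ∞) (wA : Assertion → ℕ∞) (q : BCQ) : Prop :=
  ∀ (U : Type) (I : Interp U), I.Proper → cost T A wT wA I = optCost T A wT wA → satQ I q

/-! ### Occurrences of symbols -/

def Role.base : Role → RName
  | Role.name r => r
  | Role.inv r => r

def Concept.cnames : Concept → Finset CName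
  | Concept.atom A => {A}
  | Concept.neg C => C.cnames
  | Concept.conj C D => C.cnames ∪ D.cnames
  | Concept.ex _ C => C.cnames
  | _ => ∅

def Concept.rnames : Concept → Finset RName
  | Concept.neg C => C.rnames
  | Concept.conj C D => C.rnames ∪ D.rnames
  | Concept.ex r C => insert r.base C.rnames
  | _ => ∅

def Concept.indNames : Concept → Finset IndName
  | Concept.nom a => {a}
  | Concept.neg C => C.indNames
  | Concept.conj C D => C.indNames ∪ D.indNames
  | Concept.ex _ C => C.indNames
  | _ => ∅

def Axiom.cnames : Axiom → Finset CName
  | Axiom.ci C D => C.cnames ∪ D.cnames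
  | Axiom.ri _ _ => ∅

def Axiom.rnames : Axiom → Finset RName
  | Axiom.ci C D => C.rnames ∪ D.rnames
  | Axiom.ri r s => {r.base, s.base}

def Axiom.indNames : Axiom → Finset IndName
  | Axiom.ci C D => C.indNames ∪ D.indNames
  | Axiom.ri _ _ => ∅

def Assertion.cnames : Assertion → Finset CName
  | Assertion.ca A _ => {A}
  | Assertion.ra _ _ _ => ∅

def Assertion.rnames : Assertion → Finset RName
  | Assertion.ca _ _ => ∅
  | Assertion.ra r _ _ => {r}

def Assertion.indNames : Assertion → Finset IndName
  | Assertion.ca _ a => {a}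
  | Assertion.ra _ a b => {a, b}

/-- The individual names occurring in an ABox. -/
def aboxInds (A : Finset Assertion) : Finset IndName := A.biUnion Assertion.indNames

/-- The individual names occurring in a KB. -/
def kbInds (T : Finset Axiom) (A : Finset Assertion) : Finset IndName :=
  T.biUnion Axiom.indNames ∪ aboxInds A

def Term.indNames : Term → Finset IndName
  | Term.var _ => ∅
  | Term.ind a => {a}

def QAtom.indNames : QAtom → Finset IndName
  | QAtom.ca _ t => t.indNames
  | QAtom.ra _ t t' => t.indNames ∪ t'.indNames

def QAtom.cnames : QAtom → Finset CName
  | QAtom.ca A _ => {A}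
  | QAtom.ra _ _ _ => ∅

def qInds (q : BCQ) : Finset IndName := q.biUnion QAtom.indNames

def qCnames (q : BCQ) : Finset CName := q.biUnion QAtom.cnames

/-! ### Sizes -/

def Concept.size : Concept → ℕ
  | Concept.top => 1
  | Concept.bot => 1
  | Concept.atom _ => 1
  | Concept.nom _ => 1
  | Concept.neg C => C.size + 1
  | Concept.conj C D => C.size + D.size + 1
  | Concept.ex _ C => C.size + 2

def Axiom.size : Axiom → ℕ
  | Axiom.ci C D => C.size + D.size + 1
  | Axiom.ri _ _ => 3

def Assertion.size : Assertion → ℕ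
  | Assertion.ca _ _ => 2
  | Assertion.ra _ _ _ => 3

def tboxSize (T : Finset Axiom) : ℕ := ∑ τ ∈ T, τ.size

def aboxSize (A : Finset Assertion) : ℕ := ∑ α ∈ A, α.size

/-! ### DL-Lite fragments -/

/-- Basic concepts: concept names and unqualified existential restrictions `∃r` (with a
possibly inverse role `r`), the latter rendered as `∃r.⊤`. -/
inductive IsBasic : Concept → Prop
  | atom (A : CName) : IsBasic (Concept.atom A)
  | ex (r : Role) : IsBasic (Concept.ex r Concept.top)

/-- A `DL-Lite_core` axiom: `B ⊑ C` or `B ⊓ C ⊑ ⊥` with `B, C` basic concepts. -/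
def IsCoreAxiom (τ : Axiom) : Prop :=
  (∃ B C, τ = Axiom.ci B C ∧ IsBasic B ∧ IsBasic C) ∨
  (∃ B C, τ = Axiom.ci (Concept.conj B C) Concept.bot ∧ IsBasic B ∧ IsBasic C)

def IsDLLiteCore (T : Finset Axiom) : Prop := ∀ τ ∈ T, IsCoreAxiom τ

/-- Concepts built from basic concepts using `¬`, `⊓` (and hence also `⊔`). -/
inductive IsBoolConcept : Concept → Prop
  | basic {C} : IsBasic C → IsBoolConcept C
  | neg {C} : IsBoolConcept C → IsBoolConcept (Concept.neg C)
  | conj {C D} : IsBoolConcept C → IsBoolConcept D → IsBoolConcept (Concept.conj C D)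

/-- A `DL-Lite_bool^H` axiom: a concept inclusion between Boolean combinations of basic
concepts, or a role inclusion. -/
def IsBoolHAxiom (τ : Axiom) : Prop :=
  (∃ C D, τ = Axiom.ci C D ∧ IsBoolConcept C ∧ IsBoolConcept D) ∨ (∃ r s, τ = Axiom.ri r s)

def IsDLLiteBoolH (T : Finset Axiom) : Prop := ∀ τ ∈ T, IsBoolHAxiom τ

/-! An interpretation of finite cost for the extended KB must satisfy `X(a)`, whose weight
is `∞`. If it also falsifies `Xb(a)`, its cost is one more than its cost for `(T, A)`, plus
the non-negative contribution of `X ⊓ Xb ⊑ ⊥`. Conversely, emptying the fresh concept `Xb`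
in an interpretation of `X(a)` leaves its cost for `(T, A)` unchanged, satisfies
`X ⊓ Xb ⊑ ⊥` and falsifies `Xb(a)` at cost one. -/

abbrev Axiom.disjAtoms (B C : CName) : Axiom :=
  Axiom.ci (Concept.conj (Concept.atom B) (Concept.atom C)) Concept.bot

def Interp.eraseConcept (I : Interp U) (B : CName) : Interp U where
  dom := I.dom
  indI := I.indI
  cI := Function.update I.cI B ∅
  rI := I.rI
  cI_sub C := by
    rcases eq_or_ne C B with rfl | hC
    · simp
    · simpa [hC] using I.cI_sub C
  rI_sub := I.rI_sub

section EraseConcept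

variable (I : Interp U) {B : CName}

theorem Interp.eraseConcept_cI_self : (I.eraseConcept B).cI B = ∅ := by
  simp [Interp.eraseConcept]

theorem Interp.eraseConcept_cI_of_ne {C : CName} (h : C ≠ B) :
    (I.eraseConcept B).cI C = I.cI C := by
  simp [Interp.eraseConcept, h]

theorem Role.interp_eraseConcept (r : Role) :
    r.interp (I.eraseConcept B) = r.interp I := by
  cases r <;> rfl

theorem Concept.interp_eraseConcept {C : Concept} (h : B ∉ C.cnames) :
    C.interp (I.eraseConcept B) = C.interp I := by
  induction C with
  | atom C =>
    exact I.eraseConcept_cI_of_ne fun hCB => h (by simp [Concept.cnames, hCB])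
  | neg C ih => simp only [Concept.interp, ih (by simpa [Concept.cnames] using h)]; rfl
  | conj C D ihC ihD =>
    simp only [Concept.cnames, Finset.mem_union, not_or] at h
    simp only [Concept.interp, ihC h.1, ihD h.2]
  | ex r C ih =>
    simp only [Concept.interp, Role.interp_eraseConcept, ih (by simpa [Concept.cnames] using h)]
  | _ => rfl

theorem Axiom.vioCount_eraseConcept {τ : Axiom} (h : B ∉ τ.cnames) :
    τ.vioCount (I.eraseConcept B) = τ.vioCount I := by
  cases τ with
  | ci C D =>
    simp only [Axiom.cnames, Finset.mem_union, not_or] at h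
    simp only [Axiom.vioCount, vioCI, Concept.interp_eraseConcept I h.1,
      Concept.interp_eraseConcept I h.2]
  | ri r s => simp only [Axiom.vioCount, vioRI, Role.interp_eraseConcept]

theorem Assertion.sat_eraseConcept {α : Assertion} (h : B ∉ α.cnames) :
    α.sat (I.eraseConcept B) ↔ α.sat I := by
  cases α with
  | ca C b =>
    simp only [Assertion.sat]
    rw [I.eraseConcept_cI_of_ne fun hCB => h (by simp [Assertion.cnames, hCB])]
    rfl
  | ra r b c => rfl

theorem Axiom.vioCount_disjAtoms_eraseConcept (C : CName) :
    (Axiom.disjAtoms C B).vioCount (I.eraseConcept B) = 0 := by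
  simp [Axiom.vioCount, vioCI, Concept.interp, I.eraseConcept_cI_self]

end EraseConcept

section Cost

variable {T : Finset Axiom} {A : Finset Assertion} {wT : Axiom → ℕ∞} {wA : Assertion → ℕ∞}
  (I : Interp U)

theorem cost_congr {wT' : Axiom → ℕ∞} {wA' : Assertion → ℕ∞}
    (hT : ∀ τ ∈ T, wT τ = wT' τ) (hA : ∀ α ∈ A, ¬ α.sat I → wA α = wA' α) :
    cost T A wT wA I = cost T A wT' wA' I := by
  classical
  unfold cost
  congr 1
  · exact Finset.sum_congr rfl fun τ hτ => by rw [hT τ hτ]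
  · refine Finset.sum_congr rfl fun α hα => ?_
    by_cases hs : α.sat I
    · simp [hs]
    · simp [hs, hA α hα hs]

theorem cost_eraseConcept {B : CName} (hT : ∀ τ ∈ T, B ∉ τ.cnames)
    (hA : ∀ α ∈ A, B ∉ α.cnames) :
    cost T A wT wA (I.eraseConcept B) = cost T A wT wA I := by
  classical
  unfold cost
  congr 1
  · exact Finset.sum_congr rfl fun τ hτ => by rw [Axiom.vioCount_eraseConcept I (hT τ hτ)]
  · exact Finset.sum_congr rfl fun α hα => by
      simp only [Assertion.sat_eraseConcept I (hA α hα)]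

theorem cost_insert_axiom {τ : Axiom} (hτ : τ ∉ T) :
    cost (insert τ T) A wT wA I = wT τ * τ.vioCount I + cost T A wT wA I := by
  rw [cost, cost, Finset.sum_insert hτ, add_assoc]

theorem cost_insert_of_sat {α : Assertion} (hs : α.sat I) :
    cost T (insert α A) wT wA I = cost T A wT wA I := by
  classical
  by_cases hα : α ∈ A
  · rw [Finset.insert_eq_of_mem hα]
  · rw [cost, cost, Finset.sum_insert hα, if_pos hs, zero_add]

theorem cost_insert_of_not_sat {α : Assertion} (hα : α ∉ A) (hs : ¬ α.sat I) :
    cost T (insert α A) wT wA I = cost T A wT wA I + wA α := by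
  rw [cost, cost, Finset.sum_insert hα, if_neg hs, add_comm (wA α), add_assoc]

theorem le_cost_of_not_sat {α : Assertion} (hα : α ∈ A) (hs : ¬ α.sat I) :
    wA α ≤ cost T A wT wA I := by
  classical
  calc wA α = if α.sat I then 0 else wA α := (if_neg hs).symm
    _ ≤ ∑ β ∈ A, if β.sat I then 0 else wA β :=
      Finset.single_le_sum (f := fun β => if β.sat I then 0 else wA β)
        (fun _ _ => zero_le) hα
    _ ≤ cost T A wT wA I := le_add_self

end Cost

theorem satQ_singleton_ca_ind_iff {I : Interp U} (hI : I.Proper) (B : CName) (b : IndName) :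
    satQ I {QAtom.ca B (Term.ind b)} ↔ (Assertion.ca B b).sat I := by
  simp only [satQ, Finset.mem_singleton, forall_eq, QAtom.sat, Term.eval, Assertion.sat]
  exact ⟨fun ⟨_, _, h⟩ => h, fun h => ⟨fun _ => I.indI b, fun _ => hI b, h⟩⟩

theorem cost_disjAtoms_reduction {T : Finset Axiom} {A : Finset Assertion}
    {wT : Axiom → ℕ∞} {wA : Assertion → ℕ∞} {X Xb : CName} {a : IndName}
    (hτ : Axiom.disjAtoms X Xb ∉ T) (hβ : Assertion.ca Xb a ∉ A) (I : Interp U)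
    (hX : (Assertion.ca X a).sat I) (hXb : ¬ (Assertion.ca Xb a).sat I) :
    cost (insert (Axiom.disjAtoms X Xb) T)
        (insert (Assertion.ca X a) (insert (Assertion.ca Xb a) A))
        (fun τ => if τ = Axiom.disjAtoms X Xb then ⊤ else wT τ)
        (fun α => if α = Assertion.ca Xb a then 1 else if α = Assertion.ca X a then ⊤ else wA α) I
      = ⊤ * (Axiom.disjAtoms X Xb).vioCount I + (cost T A wT wA I + 1) := by
  rw [cost_insert_axiom I hτ, cost_insert_of_sat I hX, cost_insert_of_not_sat I hβ hXb,
    if_pos rfl, if_pos rfl]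
  congr 2
  refine (cost_congr I (fun τ hτ' => ?_) fun α hα hs => ?_).symm
  · rw [if_neg (ne_of_mem_of_not_mem hτ' hτ)]
  · rw [if_neg (ne_of_mem_of_not_mem hα hβ), if_neg (by rintro rfl; exact hs hX)]

theorem statement7_general (T : Finset Axiom)
    (A : Finset Assertion) (wT : Axiom → ℕ∞) (wA : Assertion → ℕ∞)
    (k : ℕ) (X : CName) (a : IndName)
    (Xb : CName) (hXb : Xb ≠ X)
    (hXbT : ∀ τ ∈ T, Xb ∉ Axiom.cnames τ) (hXbA : ∀ α ∈ A, Xb ∉ Assertion.cnames α) :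
    satP T A wT wA k {QAtom.ca X (Term.ind a)} ↔
      ¬ satC (insert (Axiom.ci (Concept.conj (Concept.atom X) (Concept.atom Xb)) Concept.bot) T)
          (insert (Assertion.ca X a) (insert (Assertion.ca Xb a) A))
          (fun τ =>
            if τ = Axiom.ci (Concept.conj (Concept.atom X) (Concept.atom Xb)) Concept.bot then ⊤
            else wT τ)
          (fun α =>
            if α = Assertion.ca Xb a then 1
            else if α = Assertion.ca X a then ⊤
            else wA α)
          (k + 1) {QAtom.ca Xb (Term.ind a)} := by
  have hτ : Axiom.disjAtoms X Xb ∉ T := fun h =>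
    hXbT _ h (by simp [Axiom.cnames, Concept.cnames])
  have hβ : Assertion.ca Xb a ∉ A := fun h => hXbA _ h (by simp [Assertion.cnames])
  constructor
  · rintro ⟨U, I, hI, hc, hq⟩ hC
    have hX := (satQ_singleton_ca_ind_iff hI X a).1 hq
    set J := I.eraseConcept Xb
    have hJX : (Assertion.ca X a).sat J :=
      (Assertion.sat_eraseConcept I (by simpa [Assertion.cnames] using hXb)).2 hX
    have hJXb : ¬ (Assertion.ca Xb a).sat J := by
      simp [J, Assertion.sat, Interp.eraseConcept_cI_self]
    refine hJXb ((satQ_singleton_ca_ind_iff (I := J) hI Xb a).1 (hC U J hI ?_))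
    rw [cost_disjAtoms_reduction hτ hβ J hJX hJXb, Axiom.vioCount_disjAtoms_eraseConcept,
      mul_zero, zero_add, cost_eraseConcept I hXbT hXbA, Nat.cast_succ]
    gcongr
  · simp only [satC, not_forall]
    rintro ⟨U, I, hI, hc, hq⟩
    have hnXb : ¬ (Assertion.ca Xb a).sat I := mt (satQ_singleton_ca_ind_iff hI Xb a).2 hq
    have hX : (Assertion.ca X a).sat I := by
      by_contra hX
      have := (le_cost_of_not_sat I (Finset.mem_insert_self _ _) hX).trans hc
      simp [hXb.symm] at this
    refine ⟨U, I, hI, ?_, (satQ_singleton_ca_ind_iff hI X a).2 hX⟩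
    have := le_add_self.trans ((cost_disjAtoms_reduction hτ hβ I hX hnXb).symm.le.trans hc)
    rwa [Nat.cast_succ, ENat.add_le_add_iff_right ENat.one_ne_top] at this

/-- (Reduction of `IQAₚᵏ` to the complement of `IQA꜀ᵏ⁺¹`, concept
assertion query.)  Let `(T, A)_ω` be a `DL-Lite_core` WKB, `X` a concept name, `a` an
individual name, and `Xb` (`= Ā`) a fresh concept name.  With
`T' = T ∪ {X ⊓ Xb ⊑ ⊥}`, `A' = A ∪ {X(a), Xb(a)}`, weight `∞` on the new axiom and on
`X(a)`, and weight `1` on `Xb(a)`: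
`(T,A)_ω ⊨ₚᵏ X(a)` iff `(T',A')_{ω'} ⊭꜀ᵏ⁺¹ Xb(a)`. -/
theorem statement7 (T : Finset Axiom) (hcore : IsDLLiteCore T)
    (A : Finset Assertion) (wT : Axiom → ℕ∞) (wA : Assertion → ℕ∞)
    (hwT : ∀ τ ∈ T, 1 ≤ wT τ) (hwA : ∀ α ∈ A, 1 ≤ wA α)
    (k : ℕ) (X : CName) (a : IndName)
    (Xb : CName) (hXb : Xb ≠ X)
    (hXbT : ∀ τ ∈ T, Xb ∉ Axiom.cnames τ) (hXbA : ∀ α ∈ A, Xb ∉ Assertion.cnames α) :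
    satP T A wT wA k {QAtom.ca X (Term.ind a)} ↔
      ¬ satC (insert (Axiom.ci (Concept.conj (Concept.atom X) (Concept.atom Xb)) Concept.bot) T)
          (insert (Assertion.ca X a) (insert (Assertion.ca Xb a) A))
          (fun τ =>
            if τ = Axiom.ci (Concept.conj (Concept.atom X) (Concept.atom Xb)) Concept.bot then ⊤
            else wT τ)
          (fun α =>
            if α = Assertion.ca Xb a then 1
            else if α = Assertion.ca X a then ⊤
            else wA α)
          (k + 1) {QAtom.ca Xb (Term.ind a)} :=
  statement7_general T A wT wA k X a Xb hXb hXbT hXbA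

end DL
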